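/- Fix ρ ∈ (0,1] and define k̃ : [−1,1] → ℝ by k̃(u) = u + (ρ/π)(√(1−u²) − u·arccos u). Let 0 ≤ d < u < 1 and denote by k̃^{(L)} the L-fold composition of k̃. Then the sequence s_L := (k̃^{(L)}(u) − k̃^{(L)}(d)) / (1 − k̃^{(L)}(d)) converges to 0 as L → ∞. -/

import Mathlib

/-- The normalized layer-to-layer kernel map of a deep random leaky-ReLU network,
k̃(u) = u + (ρ/π)(√(1−u²) − u·arccos u). -/
noncomputable def ktilde (ρ : ℝ) (u : ℝ) : ℝ :=
  u + ρ / Real.pi * (Real.sqrt (1 - u ^ 2) - u * Real.arccos u)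

namespace SalienceAux

open Real Filter Set

noncomputable def hfn (x : ℝ) : ℝ := Real.sqrt (1 - x ^ 2) - x * Real.arccos x

lemma ktilde_eq (ρ x : ℝ) : ktilde ρ x = x + ρ / π * hfn x := rfl

lemma hfn_pos {x : ℝ} (h0 : 0 ≤ x) (h1 : x < 1) : 0 < hfn x := by
  rcases eq_or_lt_of_le h0 with h | h
  · simp [hfn, ← h]
  · have hθ0 : 0 < arccos x := arccos_pos.2 h1
    have hθ2 : arccos x < π / 2 := arccos_lt_pi_div_two.2 h
    have ht := lt_tan hθ0 hθ2
    rw [tan_eq_sin_div_cos, sin_arccos, cos_arccos (by linarith) h1.le] at ht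
    have : x * arccos x < Real.sqrt (1 - x ^ 2) := by
      rw [lt_div_iff₀ h] at ht; linarith [ht]
    simpa [hfn] using this

lemma hfn_le1 {x : ℝ} (h0 : 0 ≤ x) : hfn x ≤ (1 - x) * Real.sqrt (1 - x ^ 2) := by
  have hs : Real.sqrt (1 - x ^ 2) ≤ arccos x := by
    have := Real.sin_le (arccos_nonneg x)
    rwa [sin_arccos] at this
  have : x * Real.sqrt (1 - x ^ 2) ≤ x * arccos x :=
    mul_le_mul_of_nonneg_left hs h0
  simp only [hfn]; nlinarith

lemma hfn_le2 {x : ℝ} (h0 : 0 ≤ x) (h1 : x ≤ 1) :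
    hfn x ≤ Real.sqrt 2 * ((1 - x) * Real.sqrt (1 - x)) := by
  have h2 : Real.sqrt (1 - x ^ 2) ≤ Real.sqrt 2 * Real.sqrt (1 - x) := by
    rw [← Real.sqrt_mul (by norm_num : (0:ℝ) ≤ 2)]
    exact Real.sqrt_le_sqrt (by nlinarith)
  have := hfn_le1 h0
  have hx : 0 ≤ 1 - x := by linarith
  nlinarith [Real.sqrt_nonneg (1 - x ^ 2), Real.sqrt_nonneg (1 - x), Real.sqrt_nonneg 2]

lemma hfn_le3 {x : ℝ} (h0 : 0 ≤ x) (h1 : x ≤ 1) : hfn x ≤ 1 - x := by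
  have := hfn_le1 h0
  have hb : Real.sqrt (1 - x ^ 2) ≤ 1 := Real.sqrt_le_one.mpr (by nlinarith)
  nlinarith [Real.sqrt_nonneg (1 - x ^ 2)]

lemma continuous_ktilde (ρ : ℝ) : Continuous (ktilde ρ) := by
  unfold ktilde
  exact continuous_id.add (continuous_const.mul
    ((Real.continuous_sqrt.comp (by fun_prop)).sub (continuous_id.mul Real.continuous_arccos)))

lemma hasDerivAt_ktilde (ρ : ℝ) {x : ℝ} (h1 : -1 < x) (h2 : x < 1) :
    HasDerivAt (ktilde ρ) (1 - ρ / π * arccos x) x := by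
  have hx2 : (0:ℝ) < 1 - x ^ 2 := by nlinarith
  have hs : (0:ℝ) < Real.sqrt (1 - x ^ 2) := Real.sqrt_pos.2 hx2
  have d1 : HasDerivAt (fun y : ℝ => 1 - y ^ 2) (-(2 * x)) x := by
    simpa using (hasDerivAt_pow 2 x).const_sub 1
  have d2 := d1.sqrt hx2.ne'
  have d3 := Real.hasDerivAt_arccos (by linarith : x ≠ -1) (by linarith : x ≠ 1)
  have d4 := (hasDerivAt_id x).mul d3
  have d6 := (hasDerivAt_id x).add ((d2.sub d4).const_mul (ρ / π))
  convert d6 using 1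
  · rfl
  · rfl
  · rfl
  have hπ := Real.pi_pos
  simp only [id]
  field_simp
  ring

lemma strictMonoOn_ktilde {ρ : ℝ} (hρ0 : 0 < ρ) (hρ1 : ρ ≤ 1) :
    StrictMonoOn (ktilde ρ) (Icc 0 1) := by
  apply strictMonoOn_of_deriv_pos (convex_Icc 0 1) (continuous_ktilde ρ).continuousOn
  intro x hx
  rw [interior_Icc] at hx
  rw [(hasDerivAt_ktilde ρ (by linarith [hx.1]) hx.2).deriv]
  have hπ := Real.pi_pos
  have ha : arccos x ≤ π / 2 := arccos_le_pi_div_two.2 hx.1.le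
  have : ρ / π * arccos x ≤ ρ / π * (π / 2) :=
    mul_le_mul_of_nonneg_left ha (by positivity)
  have : ρ / π * (π / 2) = ρ / 2 := by field_simp
  nlinarith [arccos_nonneg x, mul_le_mul_of_nonneg_left ha (le_of_lt (div_pos hρ0 hπ))]

lemma ktilde_lt_one {ρ : ℝ} (hρ0 : 0 < ρ) (hρ1 : ρ ≤ 1) {x : ℝ}
    (h0 : 0 ≤ x) (h1 : x < 1) : ktilde ρ x < 1 := by
  have hπ := Real.pi_gt_three
  have hh := hfn_le3 h0 h1.le
  have hhp := hfn_pos h0 h1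
  rw [ktilde_eq]
  have hc : ρ / π < 1 := by
    rw [div_lt_one (by linarith)]; linarith
  nlinarith [mul_pos (sub_pos.2 hc) hhp]

lemma ktilde_gt {ρ : ℝ} (hρ0 : 0 < ρ) {x : ℝ} (h0 : 0 ≤ x) (h1 : x < 1) :
    x < ktilde ρ x := by
  have hπ := Real.pi_pos
  have := hfn_pos h0 h1
  rw [ktilde_eq]
  nlinarith [div_pos hρ0 hπ]

end SalienceAux

open Real Filter Set Topology SalienceAux in
/-- Analytic core of the salience proposition: for 0 ≤ d < u < 1, the normalized
salience s_L = (k̃^{(L)}(u) − k̃^{(L)}(d)) / (1 − k̃^{(L)}(d)) converges to 0 as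
the depth L → ∞. -/
theorem salience_tendsto_zero (ρ : ℝ) (hρ : ρ ∈ Set.Ioc (0 : ℝ) 1)
    (d u : ℝ) (hd : 0 ≤ d) (hdu : d < u) (hu : u < 1) :
    Filter.Tendsto
      (fun L : ℕ =>
        ((ktilde ρ)^[L] u - (ktilde ρ)^[L] d) / (1 - (ktilde ρ)^[L] d))
      Filter.atTop (nhds 0) := by
  obtain ⟨hρ0, hρ1⟩ := hρ
  have hπ := Real.pi_pos
  have hd1 : d < 1 := hdu.trans hu
  have hu0 : 0 ≤ u := hd.trans hdu.le
  -- iterates stay in [0,1)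
  have mem : ∀ (a : ℝ), 0 ≤ a → a < 1 → ∀ L, 0 ≤ (ktilde ρ)^[L] a ∧ (ktilde ρ)^[L] a < 1 := by
    intro a h0 h1 L
    induction L with
    | zero => simpa using ⟨h0, h1⟩
    | succ n ih =>
      rw [Function.iterate_succ_apply']
      exact ⟨le_trans ih.1 (ktilde_gt hρ0 ih.1 ih.2).le, ktilde_lt_one hρ0 hρ1 ih.1 ih.2⟩
  -- iterates are monotone in the initial condition
  have iter_mono : ∀ (L : ℕ) (a b : ℝ), 0 ≤ a → a < 1 → b < 1 → a ≤ b →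
      (ktilde ρ)^[L] a ≤ (ktilde ρ)^[L] b := by
    intro L a b h0 ha hb hab
    induction L with
    | zero => simpa using hab
    | succ n ih =>
      rw [Function.iterate_succ_apply', Function.iterate_succ_apply']
      have hma := mem a h0 ha n
      have hmb := mem b (h0.trans hab) hb n
      exact (strictMonoOn_ktilde hρ0 hρ1).monotoneOn ⟨hma.1, hma.2.le⟩ ⟨hmb.1, hmb.2.le⟩ ih
  set x : ℕ → ℝ := fun L => (ktilde ρ)^[L] d with hxdef
  have hmemx : ∀ L, 0 ≤ x L ∧ x L < 1 := mem d hd hd1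
  have hxmono : Monotone x := by
    apply monotone_nat_of_le_succ
    intro n
    have := hmemx n
    rw [hxdef]
    simp only []
    rw [Function.iterate_succ_apply']
    exact (ktilde_gt hρ0 this.1 this.2).le
  have hbdd : BddAbove (Set.range x) := by
    refine ⟨1, ?_⟩
    rintro _ ⟨L, rfl⟩
    exact (hmemx L).2.le
  have hlim : Tendsto x atTop (𝓝 (⨆ L, x L)) := tendsto_atTop_ciSup hxmono hbdd
  set ℓ := ⨆ L, x L with hℓdef
  have hℓ1 : ℓ ≤ 1 := ciSup_le fun L => (hmemx L).2.le
  have hℓ0 : 0 ≤ ℓ := le_trans (hmemx 0).1 (le_ciSup hbdd 0)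
  have hfix : ktilde ρ ℓ = ℓ := by
    have h1 : Tendsto (fun L => x (L + 1)) atTop (𝓝 ℓ) :=
      hlim.comp (tendsto_add_atTop_nat 1)
    have h2 : Tendsto (fun L => ktilde ρ (x L)) atTop (𝓝 (ktilde ρ ℓ)) :=
      ((continuous_ktilde ρ).tendsto ℓ).comp hlim
    have he : (fun L => x (L + 1)) = fun L => ktilde ρ (x L) :=
      funext fun L => Function.iterate_succ_apply' (ktilde ρ) L d
    rw [he] at h1
    exact tendsto_nhds_unique h2 h1
  have hℓeq : ℓ = 1 := by
    by_contra hne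
    have hℓlt : ℓ < 1 := lt_of_le_of_ne hℓ1 hne
    exact absurd hfix (ne_of_gt (ktilde_gt hρ0 hℓ0 hℓlt))
  have hlim1 : Tendsto x atTop (𝓝 1) := hℓeq ▸ hlim
  -- choose m with u < x m
  obtain ⟨m, hm⟩ := (hlim1.eventually (eventually_gt_nhds hu)).exists
  -- telescoping bound
  have key : ∀ L j, x (L + j) - x L ≤
      j * (Real.sqrt 2 / π * ((1 - x L) * Real.sqrt (1 - x L))) := by
    intro L j
    induction j with
    | zero => simp
    | succ n ih =>
      have hmemn := hmemx (L + n)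
      have step : x (L + n + 1) - x (L + n) ≤
          Real.sqrt 2 / π * ((1 - x L) * Real.sqrt (1 - x L)) := by
        have hstep : x (L + n + 1) = ktilde ρ (x (L + n)) :=
          Function.iterate_succ_apply' (ktilde ρ) (L + n) d
        rw [hstep, ktilde_eq]
        have h1 : ρ / π * hfn (x (L + n)) ≤ 1 / π * hfn (x (L + n)) := by
          apply mul_le_mul_of_nonneg_right _ (hfn_pos hmemn.1 hmemn.2).le
          gcongr
        have h2 := hfn_le2 hmemn.1 hmemn.2.le
        have h3 : x L ≤ x (L + n) := hxmono (Nat.le_add_right L n)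
        have h4 : Real.sqrt (1 - x (L + n)) ≤ Real.sqrt (1 - x L) :=
          Real.sqrt_le_sqrt (by linarith)
        have h5 : (1 - x (L + n)) * Real.sqrt (1 - x (L + n)) ≤
            (1 - x L) * Real.sqrt (1 - x L) :=
          mul_le_mul (by linarith) h4 (Real.sqrt_nonneg _) (by linarith [(hmemx L).2])
        have h6 : 1 / π * (Real.sqrt 2 * ((1 - x (L + n)) * Real.sqrt (1 - x (L + n)))) ≤
            1 / π * (Real.sqrt 2 * ((1 - x L) * Real.sqrt (1 - x L))) := by
          apply mul_le_mul_of_nonneg_left _ (by positivity)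
          exact mul_le_mul_of_nonneg_left h5 (Real.sqrt_nonneg 2)
        have h7 : 1 / π * hfn (x (L + n)) ≤
            1 / π * (Real.sqrt 2 * ((1 - x (L + n)) * Real.sqrt (1 - x (L + n)))) :=
          mul_le_mul_of_nonneg_left h2 (by positivity)
        have : Real.sqrt 2 / π * ((1 - x L) * Real.sqrt (1 - x L)) =
            1 / π * (Real.sqrt 2 * ((1 - x L) * Real.sqrt (1 - x L))) := by ring
        rw [this]
        linarith
      have hrw : L + (n + 1) = L + n + 1 := by ring
      rw [hrw]
      push_cast
      nlinarith [step, ih]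
  set C := (m : ℝ) * (Real.sqrt 2 / π) with hCdef
  have hbound : ∀ L, ((ktilde ρ)^[L] u - x L) / (1 - x L) ≤ C * Real.sqrt (1 - x L) := by
    intro L
    have hden : 0 < 1 - x L := by linarith [(hmemx L).2]
    have hyle : (ktilde ρ)^[L] u ≤ x (L + m) := by
      have hxm : x (L + m) = (ktilde ρ)^[L] (x m) := Function.iterate_add_apply (ktilde ρ) L m d
      rw [hxm]
      exact iter_mono L u (x m) hu0 hu (hmemx m).2 hm.le
    rw [div_le_iff₀ hden]
    calc (ktilde ρ)^[L] u - x L ≤ x (L + m) - x L := by linarith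
      _ ≤ m * (Real.sqrt 2 / π * ((1 - x L) * Real.sqrt (1 - x L))) := key L m
      _ = C * Real.sqrt (1 - x L) * (1 - x L) := by rw [hCdef]; ring
  have hnonneg : ∀ L, 0 ≤ ((ktilde ρ)^[L] u - x L) / (1 - x L) := by
    intro L
    have hden : 0 < 1 - x L := by linarith [(hmemx L).2]
    apply div_nonneg _ hden.le
    have := iter_mono L d u hd hd1 hu hdu.le
    linarith [this]
  have hg : Tendsto (fun L => C * Real.sqrt (1 - x L)) atTop (𝓝 0) := by
    have h0 : Tendsto (fun L => 1 - x L) atTop (𝓝 0) := by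
      simpa using (tendsto_const_nhds (x := (1:ℝ)) (f := atTop)).sub hlim1
    have h1 := (Real.continuous_sqrt.tendsto 0).comp h0
    simp only [Function.comp, Real.sqrt_zero] at h1
    simpa using h1.const_mul C
  exact squeeze_zero hnonneg hbound hg
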